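/- Let N0 ∈ K with 0 ≤ N0 ≤ 1 a.e., let V0 ∈ L^∞(0,1), set N(t) := proj_K(N0 + t·V0), assume 0 ≤ N(t,x) ≤ 1 for a.e. x and every t ≥ 0, and let N_∞ be the a.e. limit of N(t) as t → ∞. Define P(t,x) := ∫₀ˣ N(t,z)dz. Then for each x ∈ [0,1] the function t ↦ P(t,x) is nondecreasing and concave on [0,∞), and P(t,x) → ∫₀ˣ N_∞(z)dz as t → ∞ uniformly in x ∈ [0,1]. -/

import Mathlib

open MeasureTheory

/-- Lebesgue measure restricted to the interval `(0,1)`; `L²(0,1)` is `Lp ℝ 2 μ01`. -/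
noncomputable def μ01 : Measure ℝ := volume.restrict (Set.Ioo 0 1)

/-- `K` is the set of elements of `L²(0,1)` admitting a nondecreasing representative
on `(0,1)`; it is a nonempty closed convex cone. -/
def K01 : Set (Lp ℝ 2 μ01) :=
  {f | ∃ g : ℝ → ℝ, MonotoneOn g (Set.Ioo 0 1) ∧ (f : ℝ → ℝ) =ᵐ[μ01] g}

open Set
open scoped RealInnerProductSpace


instance : IsFiniteMeasure μ01 := by
  constructor; rw [μ01, Measure.restrict_apply_univ]; simp [Real.volume_Ioo]

section Prelim

lemma memLp2 {f : ℝ → ℝ} (hm : AEStronglyMeasurable f μ01) {C : ℝ} (hb : ∀ y, |f y| ≤ C) :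
    MemLp f 2 μ01 :=
  MemLp.of_bound hm C (Filter.Eventually.of_forall (by simpa [Real.norm_eq_abs] using hb))

noncomputable def mkLp (f : ℝ → ℝ) (hm : Measurable f) (C : ℝ) (hb : ∀ y, |f y| ≤ C) :
    Lp ℝ 2 μ01 := (memLp2 hm.aestronglyMeasurable hb).toLp f

lemma mkLp_coe (f : ℝ → ℝ) (hm : Measurable f) (C : ℝ) (hb : ∀ y, |f y| ≤ C) :
    (mkLp f hm C hb : ℝ → ℝ) =ᵐ[μ01] f := MemLp.coeFn_toLp _

lemma K01_add {f g : Lp ℝ 2 μ01} (hf : f ∈ K01) (hg : g ∈ K01) : f + g ∈ K01 := by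
  obtain ⟨a, ha, hfa⟩ := hf
  obtain ⟨b, hb, hgb⟩ := hg
  exact ⟨a + b, ha.add hb, (Lp.coeFn_add f g).trans (hfa.add hgb)⟩

lemma K01_smul {f : Lp ℝ 2 μ01} {c : ℝ} (hc : 0 ≤ c) (hf : f ∈ K01) : c • f ∈ K01 := by
  obtain ⟨a, ha, hfa⟩ := hf
  refine ⟨fun y => c * a y, fun y hy z hz hyz => by
    exact mul_le_mul_of_nonneg_left (ha hy hz hyz) hc, ?_⟩
  filter_upwards [Lp.coeFn_smul c f, hfa] with y h1 h2
  simp [h1, h2]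

lemma mem_K01_of_rep (f : Lp ℝ 2 μ01) (g : ℝ → ℝ) (hg : Monotone g)
    (h : (f : ℝ → ℝ) =ᵐ[μ01] g) : f ∈ K01 := ⟨g, hg.monotoneOn _, h⟩

/-- Variational inequality for the nearest-point map. -/
lemma vi (proj : Lp ℝ 2 μ01 → Lp ℝ 2 μ01)
    (hprojmem : ∀ u, proj u ∈ K01)
    (hprojnear : ∀ u, ∀ k ∈ K01, ‖u - proj u‖ ≤ ‖u - k‖)
    (u : Lp ℝ 2 μ01) {k : Lp ℝ 2 μ01} (hk : k ∈ K01) :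
    ⟪u - proj u, k - proj u⟫ ≤ 0 := by
  set p := proj u with hp
  have key : ∀ θ : ℝ, 0 < θ → θ ≤ 1 → 2 * ⟪u - p, k - p⟫ ≤ θ * ‖k - p‖ ^ 2 := by
    intro θ hθ hθ1
    have hmem : (1 - θ) • p + θ • k ∈ K01 :=
      K01_add (K01_smul (by linarith) (hprojmem u)) (K01_smul hθ.le hk)
    have h1 : ‖u - p‖ ≤ ‖u - ((1 - θ) • p + θ • k)‖ := hprojnear u _ hmem
    have h2 : u - ((1 - θ) • p + θ • k) = (u - p) - θ • (k - p) := by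
      rw [sub_smul, one_smul, smul_sub]; abel
    rw [h2] at h1
    have h3 : ‖u - p‖ ^ 2 ≤ ‖u - p‖ ^ 2 - 2 * ⟪u - p, θ • (k - p)⟫ + ‖θ • (k - p)‖ ^ 2 := by
      rw [← norm_sub_sq_real]
      exact pow_le_pow_left₀ (norm_nonneg _) h1 2
    rw [real_inner_smul_right, norm_smul] at h3
    have h4 : 2 * (θ * ⟪u - p, k - p⟫) ≤ (‖θ‖ * ‖k - p‖) ^ 2 := by linarith
    rw [Real.norm_eq_abs, abs_of_pos hθ, mul_pow] at h4
    have := mul_le_mul_of_nonneg_left h4 (le_of_lt (inv_pos.mpr hθ))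
    calc 2 * ⟪u - p, k - p⟫ = θ⁻¹ * (2 * (θ * ⟪u - p, k - p⟫)) := by
          field_simp
      _ ≤ θ⁻¹ * (θ ^ 2 * ‖k - p‖ ^ 2) := this
      _ = θ * ‖k - p‖ ^ 2 := by field_simp
  by_contra hcon
  push_neg at hcon
  set I := ⟪u - p, k - p⟫ with hI
  have hIpos : 0 < I := hcon
  set c := ‖k - p‖ ^ 2 with hc
  have hc0 : 0 ≤ c := sq_nonneg _
  rcases eq_or_lt_of_le hc0 with hc0' | hcpos
  · have := key 1 one_pos le_rfl
    rw [← hc0'] at this; linarith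
  · have hθpos : 0 < min 1 (I / c) := lt_min one_pos (div_pos hIpos hcpos)
    have := key _ hθpos (min_le_left _ _)
    have h5 : min 1 (I / c) * c ≤ (I / c) * c := by
      apply mul_le_mul_of_nonneg_right (min_le_right _ _) hc0
    rw [div_mul_cancel₀ _ (ne_of_gt hcpos)] at h5
    linarith

lemma vi_cone (proj : Lp ℝ 2 μ01 → Lp ℝ 2 μ01)
    (hprojmem : ∀ u, proj u ∈ K01)
    (hprojnear : ∀ u, ∀ k ∈ K01, ‖u - proj u‖ ≤ ‖u - k‖)
    (u : Lp ℝ 2 μ01) {k : Lp ℝ 2 μ01} (hk : k ∈ K01) :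
    ⟪u - proj u, k⟫ ≤ 0 := by
  have := vi proj hprojmem hprojnear u (K01_add hk (hprojmem u))
  simpa using this

lemma ae_Ioo01 : ∀ᵐ y ∂μ01, y ∈ Ioo (0:ℝ) 1 := by
  rw [μ01]; exact ae_restrict_mem measurableSet_Ioo

lemma restrict01 {s : Set ℝ} (hs : MeasurableSet s) (hsub : s ⊆ Ioo 0 1) :
    μ01.restrict s = volume.restrict s := by
  rw [μ01, Measure.restrict_restrict hs, Set.inter_eq_self_of_subset_left hsub]

lemma integral01_eq (F : ℝ → ℝ) : ∫ y, F y ∂μ01 = ∫ y in (0:ℝ)..(1:ℝ), F y := by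
  rw [intervalIntegral.integral_of_le zero_le_one, integral_Ioc_eq_integral_Ioo]
  rfl

lemma intervalIntegral_congr01 {g h : ℝ → ℝ} (hgh : g =ᵐ[μ01] h) {a b : ℝ}
    (ha : 0 ≤ a) (hab : a ≤ b) (hb : b ≤ 1) :
    ∫ z in a..b, g z = ∫ z in a..b, h z := by
  rw [intervalIntegral.integral_of_le hab, intervalIntegral.integral_of_le hab,
    integral_Ioc_eq_integral_Ioo, integral_Ioc_eq_integral_Ioo]
  have hsub : Ioo a b ⊆ Ioo (0:ℝ) 1 := Ioo_subset_Ioo ha hb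
  have h1 : g =ᵐ[μ01.restrict (Ioo a b)] h := ae_restrict_of_ae hgh
  rw [restrict01 measurableSet_Ioo hsub] at h1
  exact integral_congr_ae h1

lemma intervalIntegrable01 {h : ℝ → ℝ} (hint : Integrable h μ01) {a b : ℝ}
    (ha : 0 ≤ a) (hab : a ≤ b) (hb : b ≤ 1) : IntervalIntegrable h volume a b := by
  rw [intervalIntegrable_iff_integrableOn_Ioo_of_le hab]
  have : IntegrableOn h (Ioo a b) μ01 := hint.integrableOn
  rwa [IntegrableOn, restrict01 measurableSet_Ioo (Ioo_subset_Ioo ha hb)] at this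

lemma split_three {F : ℝ → ℝ} (hF : Integrable F μ01) {a b : ℝ}
    (h0 : 0 ≤ a) (hab : a ≤ b) (hb : b ≤ 1) :
    ∫ y in (0:ℝ)..1, F y =
      (∫ y in (0:ℝ)..a, F y) + (∫ y in a..b, F y) + ∫ y in b..1, F y := by
  have i1 := intervalIntegrable01 hF le_rfl h0 (hab.trans hb)
  have i2 := intervalIntegrable01 hF h0 hab hb
  have i3 := intervalIntegrable01 hF (h0.trans hab) hb le_rfl
  rw [intervalIntegral.integral_add_adjacent_intervals i1 i2,
    intervalIntegral.integral_add_adjacent_intervals (i1.trans i2) i3]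

lemma integrable_of_L2 (f : Lp ℝ 2 μ01) : Integrable (f : ℝ → ℝ) μ01 :=
  (Lp.memLp f).integrable (by norm_num)

lemma integrable_bdd {h : ℝ → ℝ} (hm : Measurable h) {C : ℝ} (hb : ∀ y, |h y| ≤ C) :
    Integrable h μ01 := (memLp2 hm.aestronglyMeasurable hb).integrable (by norm_num)

lemma integrable_bdd_mul {h φ : ℝ → ℝ} (hint : Integrable h μ01)
    (hφm : Measurable φ) {C : ℝ} (hφb : ∀ y, |φ y| ≤ C) :
    Integrable (fun y => h y * φ y) μ01 := by
  have := hint.bdd_mul (c := C) hφm.aestronglyMeasurable.restrict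
    (Filter.Eventually.of_forall (by simpa [Real.norm_eq_abs] using hφb))
  exact this.congr (Filter.Eventually.of_forall fun y => mul_comm _ _)

lemma inner_eq_integral (f k : Lp ℝ 2 μ01) {h φ : ℝ → ℝ}
    (hh : (f : ℝ → ℝ) =ᵐ[μ01] h) (hφ : (k : ℝ → ℝ) =ᵐ[μ01] φ) :
    ⟪f, k⟫ = ∫ y in (0:ℝ)..1, h y * φ y := by
  rw [L2.inner_def, ← integral01_eq]
  apply integral_congr_ae
  filter_upwards [hh, hφ] with y h1 h2
  rw [RCLike.inner_apply, conj_trivial, h1, h2, mul_comm]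

lemma exists_global_rep (f : Lp ℝ 2 μ01)
    (hf : ∃ g : ℝ → ℝ, MonotoneOn g (Set.Ioo 0 1) ∧ (f : ℝ → ℝ) =ᵐ[μ01] g)
    (hrange : ∀ᵐ x ∂μ01, (f : ℝ → ℝ) x ∈ Icc (0:ℝ) 1) :
    ∃ g : ℝ → ℝ, Monotone g ∧ (∀ y, g y ∈ Icc (0:ℝ) 1) ∧ (f : ℝ → ℝ) =ᵐ[μ01] g := by
  obtain ⟨g0, hg0, hfg0⟩ := hf
  set g : ℝ → ℝ := fun y => if y ≤ 0 then 0 else if 1 ≤ y then 1 else max 0 (min 1 (g0 y))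
    with hgdef
  have hrange' : ∀ y, g y ∈ Icc (0:ℝ) 1 := by
    intro y
    simp only [hgdef]
    split_ifs with h1 h2
    · exact ⟨le_rfl, zero_le_one⟩
    · exact ⟨zero_le_one, le_rfl⟩
    · exact ⟨le_max_left _ _, max_le zero_le_one (min_le_left _ _)⟩
  refine ⟨g, ?_, hrange', ?_⟩
  · intro y z hyz
    rcases le_or_gt z 0 with hz0 | hz0
    · simp only [hgdef, if_pos (hyz.trans hz0), if_pos hz0]; exact le_rfl
    rcases le_or_gt y 0 with hy0 | hy0
    · calc g y = 0 := by simp only [hgdef, if_pos hy0]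
        _ ≤ g z := (hrange' z).1
    rcases le_or_gt 1 y with hy1 | hy1
    · simp only [hgdef, if_neg (not_le.mpr hy0), if_pos hy1,
        if_neg (not_le.mpr hz0), if_pos (hy1.trans hyz)]; exact le_rfl
    rcases le_or_gt 1 z with hz1 | hz1
    · calc g y ≤ 1 := (hrange' y).2
        _ = g z := by simp only [hgdef, if_neg (not_le.mpr hz0), if_pos hz1]
    · simp only [hgdef, if_neg (not_le.mpr hy0), if_neg (not_le.mpr hy1),
        if_neg (not_le.mpr hz0), if_neg (not_le.mpr hz1)]
      exact max_le_max le_rfl (min_le_min le_rfl (hg0 ⟨hy0, hy1⟩ ⟨hz0, hz1⟩ hyz))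
  · filter_upwards [hfg0, hrange, ae_Ioo01] with y h1 h2 h3
    simp only [hgdef, if_neg (not_le.mpr h3.1), if_neg (not_le.mpr h3.2)]
    rw [← h1, min_eq_right h2.2, max_eq_right h2.1]

lemma ae_ne (c : ℝ) : ∀ᵐ z : ℝ ∂volume, z ≠ c := by
  have h : volume ({c} : Set ℝ) = 0 := measure_singleton c
  rw [ae_iff]
  convert h using 2
  ext z; simp

end Prelim
section Key

lemma key_exists (proj : Lp ℝ 2 μ01 → Lp ℝ 2 μ01)
    (hprojmem : ∀ u, proj u ∈ K01)
    (hprojnear : ∀ u, ∀ k ∈ K01, ‖u - proj u‖ ≤ ‖u - k‖)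
    (u : Lp ℝ 2 μ01) {g : ℝ → ℝ} (hgmono : Monotone g)
    (hgrange : ∀ y, g y ∈ Icc (0:ℝ) 1)
    (hgae : (proj u : ℝ → ℝ) =ᵐ[μ01] g)
    {x : ℝ} (hx : x ∈ Icc (0:ℝ) 1) :
    ∃ φ : Lp ℝ 2 μ01,
      ⟪u, φ⟫ = ∫ z in (0:ℝ)..x, g z ∧
      ∀ (v : Lp ℝ 2 μ01) (gv : ℝ → ℝ), Monotone gv → (∀ y, gv y ∈ Icc (0:ℝ) 1) →
        ((proj v : ℝ → ℝ) =ᵐ[μ01] gv) → ∫ z in (0:ℝ)..x, gv z ≤ ⟪v, φ⟫ := by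
  have hgmeas : Measurable g := hgmono.measurable
  have hgabs : ∀ y, |g y| ≤ 1 := fun y =>
    abs_le.mpr ⟨by linarith [(hgrange y).1], (hgrange y).2⟩
  have hgint : Integrable g μ01 := integrable_bdd hgmeas hgabs
  set p := proj u with hpdef
  set wf : ℝ → ℝ := (Ioo 0 1).indicator (fun y => (u : ℝ → ℝ) y - g y) with hwfdef
  have hwmeas : Measurable wf :=
    ((Lp.stronglyMeasurable u).measurable.sub hgmeas).indicator measurableSet_Ioo
  have hwae : ((u - p : Lp ℝ 2 μ01) : ℝ → ℝ) =ᵐ[μ01] wf := by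
    filter_upwards [Lp.coeFn_sub u p, hgae, ae_Ioo01] with y h1 h2 h3
    rw [h1, Pi.sub_apply, h2, hwfdef, Set.indicator_of_mem h3]
  have hwint_vol : Integrable wf volume := by
    rw [hwfdef, integrable_indicator_iff measurableSet_Ioo]
    exact ((integrable_of_L2 u).sub hgint)
  have hwint : Integrable wf μ01 := hwint_vol.restrict
  set W : ℝ → ℝ := fun y => ∫ z in (0:ℝ)..y, wf z with hWdef
  have hWcont : Continuous W :=
    intervalIntegral.continuous_primitive (fun a b => hwint_vol.intervalIntegrable) 0
  have hW0 : W 0 = 0 := intervalIntegral.integral_same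
  -- W 1 = 0
  have hone : ∀ y : ℝ, |(1:ℝ)| ≤ 1 := fun y => by norm_num
  have hnegone : ∀ y : ℝ, |(fun _ : ℝ => (-1:ℝ)) y| ≤ 1 := fun y => by norm_num
  have hW1 : W 1 = 0 := by
    have e1 : ⟪u - p, mkLp (fun _ => 1) measurable_const 1 hone⟫ = ∫ y in (0:ℝ)..1, wf y * 1 :=
      inner_eq_integral _ _ hwae (mkLp_coe _ _ _ _)
    have e2 : ⟪u - p, mkLp (fun _ => (-1:ℝ)) measurable_const 1 hnegone⟫ =
        ∫ y in (0:ℝ)..1, wf y * (-1) :=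
      inner_eq_integral _ _ hwae (mkLp_coe _ _ _ _)
    have c1 : ⟪u - p, mkLp (fun _ => (1:ℝ)) measurable_const 1 hone⟫ ≤ 0 :=
      vi_cone proj hprojmem hprojnear u
        (mem_K01_of_rep _ _ monotone_const (mkLp_coe _ _ _ _))
    have c2 : ⟪u - p, mkLp (fun _ => (-1:ℝ)) measurable_const 1 hnegone⟫ ≤ 0 :=
      vi_cone proj hprojmem hprojnear u
        (mem_K01_of_rep _ _ monotone_const (mkLp_coe _ _ _ _))
    have e3 : ∫ y in (0:ℝ)..1, wf y * (-1) = -∫ y in (0:ℝ)..1, wf y * 1 := by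
      rw [← intervalIntegral.integral_neg]; congr 1; funext y; ring
    have : W 1 = ∫ y in (0:ℝ)..1, wf y * 1 := by
      simp only [hWdef, mul_one]
    rw [this]; rw [e1] at c1; rw [e2, e3] at c2; linarith
  -- W is nonnegative on [0,1]
  have hWnn : ∀ y ∈ Icc (0:ℝ) 1, 0 ≤ W y := by
    rintro y ⟨hy0, hy1⟩
    set ind : ℝ → ℝ := fun z => if z ≤ y then 0 else 1 with hinddef
    have hindmeas : Measurable ind := Measurable.ite measurableSet_Iic
      measurable_const measurable_const
    have hindmono : Monotone ind := by
      intro z1 z2 h12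
      simp only [hinddef]
      split_ifs with a b c
      · exact le_rfl
      · exact zero_le_one
      · exact absurd (h12.trans c) a
      · exact le_rfl
    have hindabs : ∀ z, |ind z| ≤ 1 := by
      intro z; simp only [hinddef]; split_ifs <;> norm_num
    have e1 : ⟪u - p, mkLp ind hindmeas 1 hindabs⟫ = ∫ z in (0:ℝ)..1, wf z * ind z :=
      inner_eq_integral _ _ hwae (mkLp_coe _ _ _ _)
    have c1 : ⟪u - p, mkLp ind hindmeas 1 hindabs⟫ ≤ 0 :=
      vi_cone proj hprojmem hprojnear u
        (mem_K01_of_rep _ _ hindmono (mkLp_coe _ _ _ _))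
    have hii : Integrable (fun z => wf z * ind z) volume := by
      have := hwint_vol.bdd_mul (c := 1) hindmeas.aestronglyMeasurable
        (Filter.Eventually.of_forall (by simpa [Real.norm_eq_abs] using hindabs))
      exact this.congr (Filter.Eventually.of_forall fun z => mul_comm _ _)
    have hsplit : ∫ z in (0:ℝ)..1, wf z * ind z =
        (∫ z in (0:ℝ)..y, wf z * ind z) + ∫ z in y..1, wf z * ind z :=
      (intervalIntegral.integral_add_adjacent_intervals hii.intervalIntegrable
        hii.intervalIntegrable).symm
    have p1 : ∫ z in (0:ℝ)..y, wf z * ind z = 0 := by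
      have : EqOn (fun z => wf z * ind z) (fun _ => (0:ℝ)) (uIcc 0 y) := by
        intro z hz
        rw [uIcc_of_le hy0] at hz
        simp only [hinddef, if_pos hz.2, mul_zero]
      rw [intervalIntegral.integral_congr this, intervalIntegral.integral_const, smul_zero]
    have p2 : ∫ z in y..1, wf z * ind z = ∫ z in y..1, wf z := by
      apply intervalIntegral.integral_congr_ae
      apply Filter.Eventually.of_forall
      intro z hz
      rw [Set.uIoc_of_le hy1] at hz
      simp only [hinddef, if_neg (not_le.mpr hz.1), mul_one]
    have hadd : W y + ∫ z in y..1, wf z = W 1 :=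
      intervalIntegral.integral_add_adjacent_intervals
        hwint_vol.intervalIntegrable hwint_vol.intervalIntegrable
    rw [e1, hsplit, p1, p2] at c1
    linarith
  -- level truncation complementarity
  have hlevel : ∀ m : ℝ, 0 ≤ m → m ≤ 1 →
      ∫ y in (0:ℝ)..1, wf y * max (m - g y) 0 = 0 := by
    intro m hm0 hm1
    set k1f : ℝ → ℝ := fun y => max (g y) m with hk1fdef
    have hk1meas : Measurable k1f := hgmeas.max measurable_const
    have hk1abs : ∀ y, |k1f y| ≤ 1 := by
      intro y
      have h1 := (hgrange y).1; have h2 := (hgrange y).2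
      rw [abs_le]
      refine ⟨?_, ?_⟩
      · simp only [hk1fdef, le_max_iff]; left; linarith
      · simp only [hk1fdef]; exact max_le h2 hm1
    set k1 := mkLp k1f hk1meas 1 hk1abs with hk1def
    have hk1mem : k1 ∈ K01 :=
      mem_K01_of_rep _ _ (hgmono.max monotone_const) (mkLp_coe _ _ _ _)
    have c1 : ⟪u - p, k1 - p⟫ ≤ 0 := vi proj hprojmem hprojnear u hk1mem
    have hk1rep : ((k1 - p : Lp ℝ 2 μ01) : ℝ → ℝ) =ᵐ[μ01] fun y => max (m - g y) 0 := by
      filter_upwards [Lp.coeFn_sub k1 p, mkLp_coe k1f hk1meas 1 hk1abs, hgae]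
        with y h1 h2 h3
      have key : k1f y - g y = max (m - g y) 0 := by
        simp only [hk1fdef]
        rcases le_total (g y) m with h | h
        · rw [max_eq_right h, max_eq_left (by linarith)]
        · rw [max_eq_left h, max_eq_right (by linarith)]; ring
      rw [h1, Pi.sub_apply, h2, h3, ← key]
    have e1 : ⟪u - p, k1 - p⟫ = ∫ y in (0:ℝ)..1, wf y * max (m - g y) 0 :=
      inner_eq_integral _ _ hwae hk1rep
    set k2f : ℝ → ℝ := fun y => min (g y) (2 * g y - m) with hk2fdef
    have hk2meas : Measurable k2f :=
      hgmeas.min ((hgmeas.const_mul 2).sub measurable_const)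
    have hk2abs : ∀ y, |k2f y| ≤ 1 := by
      intro y
      have h1 := (hgrange y).1; have h2 := (hgrange y).2
      rw [abs_le, hk2fdef]
      constructor
      · simp only [le_min_iff]; constructor <;> linarith
      · exact (min_le_left _ _).trans h2
    set k2 := mkLp k2f hk2meas 1 hk2abs with hk2def
    have hk2mono : Monotone k2f := by
      apply Monotone.min hgmono
      intro y z hyz
      have := hgmono hyz
      simp only; linarith
    have hk2mem : k2 ∈ K01 := mem_K01_of_rep _ _ hk2mono (mkLp_coe _ _ _ _)
    have c2 : ⟪u - p, k2 - p⟫ ≤ 0 := vi proj hprojmem hprojnear u hk2mem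
    have hk2rep : ((k2 - p : Lp ℝ 2 μ01) : ℝ → ℝ) =ᵐ[μ01]
        fun y => -(max (m - g y) 0) := by
      filter_upwards [Lp.coeFn_sub k2 p, mkLp_coe k2f hk2meas 1 hk2abs, hgae]
        with y h1 h2 h3
      have key : k2f y - g y = -(max (m - g y) 0) := by
        simp only [hk2fdef]
        rcases le_total (g y) m with h | h
        · rw [min_eq_right (by linarith), max_eq_left (by linarith)]; ring
        · rw [min_eq_left (by linarith), max_eq_right (by linarith)]; ring
      rw [h1, Pi.sub_apply, h2, h3, ← key]
    have e2 : ⟪u - p, k2 - p⟫ = ∫ y in (0:ℝ)..1, wf y * -(max (m - g y) 0) :=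
      inner_eq_integral _ _ hwae hk2rep
    have e3 : ∫ y in (0:ℝ)..1, wf y * -(max (m - g y) 0) =
        -∫ y in (0:ℝ)..1, wf y * max (m - g y) 0 := by
      rw [← intervalIntegral.integral_neg]; congr 1; funext y; ring
    rw [e1] at c1
    have c2' : -∫ y in (0:ℝ)..1, wf y * max (m - g y) 0 ≤ 0 := by
      rw [← e3, ← e2]; exact c2
    linarith
  -- the sup of the sublevel set
  set ρ : ℝ → ℝ → ℝ :=
    fun m lam => sSup ({0} ∪ ({y | g y < m - lam} ∩ Ioo 0 1)) with hρdef
  have hρne : ∀ m lam, ({(0:ℝ)} ∪ ({y | g y < m - lam} ∩ Ioo 0 1)).Nonempty :=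
    fun m lam => ⟨0, Or.inl rfl⟩
  have hρbdd : ∀ m lam, BddAbove ({(0:ℝ)} ∪ ({y | g y < m - lam} ∩ Ioo 0 1)) := by
    intro m lam
    refine ⟨1, ?_⟩
    rintro y (rfl | hy)
    · exact zero_le_one
    · exact hy.2.2.le
  have hρ0 : ∀ m lam, 0 ≤ ρ m lam := fun m lam =>
    le_csSup (hρbdd m lam) (Or.inl rfl)
  have hρ1 : ∀ m lam, ρ m lam ≤ 1 := by
    intro m lam
    apply csSup_le (hρne m lam)
    rintro y (rfl | hy)
    · exact zero_le_one
    · exact hy.2.2.le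
  -- Fubini: a.e. lambda, W (ρ m lam) = 0
  have fub : ∀ m : ℝ, 0 ≤ m → m ≤ 1 → ∀ᵐ lam ∂μ01, W (ρ m lam) = 0 := by
    intro m hm0 hm1
    set φm : ℝ → ℝ := fun y => max (m - g y) 0 with hφmdef
    have hφmmeas : Measurable φm := (measurable_const.sub hgmeas).max measurable_const
    have hφmmem : ∀ y, φm y ∈ Icc (0:ℝ) 1 := by
      intro y
      refine ⟨le_max_right _ _, max_le (by linarith [(hgrange y).1]) zero_le_one⟩
    set F : ℝ × ℝ → ℝ := fun q => wf q.1 * (if q.2 < φm q.1 then (1:ℝ) else 0) with hFdef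
    have hFmeas : Measurable F := by
      apply (hwmeas.comp measurable_fst).mul
      exact Measurable.ite (measurableSet_lt measurable_snd (hφmmeas.comp measurable_fst))
        measurable_const measurable_const
    have hdom : Integrable (fun q : ℝ × ℝ => wf q.1 * 1) (μ01.prod μ01) :=
      hwint.mul_prod (integrable_const 1)
    have hFint : Integrable F (μ01.prod μ01) := by
      apply hdom.mono hFmeas.aestronglyMeasurable
      apply Filter.Eventually.of_forall
      intro q
      simp only [hFdef, norm_mul, mul_one, Real.norm_eq_abs]
      have hb : |if q.2 < φm q.1 then (1:ℝ) else 0| ≤ 1 := by split_ifs <;> norm_num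
      calc |wf q.1| * |if q.2 < φm q.1 then (1:ℝ) else 0| ≤ |wf q.1| * 1 :=
            mul_le_mul_of_nonneg_left hb (abs_nonneg _)
        _ = |wf q.1| := mul_one _
    have ind_int : ∀ c : ℝ, 0 ≤ c → c ≤ 1 →
        ∫ lam, (if lam < c then (1:ℝ) else 0) ∂μ01 = c := by
      intro c h0 h1
      have heq : (fun lam => if lam < c then (1:ℝ) else 0) =
          (Iio c).indicator (fun _ => (1:ℝ)) := by
        funext lam
        rw [Set.indicator_apply]
        simp [Set.mem_Iio]
      rw [heq, integral_indicator_const _ measurableSet_Iio]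
      rw [μ01, measureReal_def, Measure.restrict_apply measurableSet_Iio]
      have : Iio c ∩ Ioo 0 1 = Ioo 0 c := by
        ext z
        constructor
        · rintro ⟨h2, h3, _⟩; exact ⟨h3, h2⟩
        · rintro ⟨h2, h3⟩; exact ⟨h3, h2, h3.trans_le h1⟩
      rw [this, Real.volume_Ioo, sub_zero, ENNReal.toReal_ofReal h0, smul_eq_mul, mul_one]
    have step1 : ∫ y, wf y * φm y ∂μ01 = ∫ y, ∫ lam, F (y, lam) ∂μ01 ∂μ01 := by
      apply integral_congr_ae
      apply Filter.Eventually.of_forall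
      intro y
      simp only [hFdef]
      rw [MeasureTheory.integral_const_mul, ind_int _ (hφmmem y).1 (hφmmem y).2]
    have step2 : ∫ y, ∫ lam, F (y, lam) ∂μ01 ∂μ01 = ∫ lam, ∫ y, F (y, lam) ∂μ01 ∂μ01 :=
      integral_integral_swap hFint
    have step0 : ∫ y, wf y * φm y ∂μ01 = 0 := by
      rw [integral01_eq]; exact hlevel m hm0 hm1
    have inner_eval : ∀ lam ∈ Ioo (0:ℝ) 1, ∫ y, F (y, lam) ∂μ01 = W (ρ m lam) := by
      intro lam hlam
      have hT : MeasurableSet {y : ℝ | g y < m - lam} := hgmeas measurableSet_Iio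
      have heq : (fun y => F (y, lam)) = ({y : ℝ | g y < m - lam}).indicator wf := by
        funext y
        rw [hFdef, Set.indicator_apply]
        simp only [mem_setOf_eq]
        have hiff : (lam < φm y) ↔ (g y < m - lam) := by
          rw [hφmdef]
          simp only [lt_max_iff]
          constructor
          · rintro (h | h)
            · linarith
            · exact absurd h (not_lt.mpr hlam.1.le)
          · intro h; left; linarith
        by_cases hc : g y < m - lam
        · rw [if_pos (hiff.mpr hc), if_pos hc, mul_one]
        · rw [if_neg (fun hh => hc (hiff.mp hh)), if_neg hc, mul_zero]
      rw [heq, integral_indicator hT]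
      have hres : μ01.restrict {y : ℝ | g y < m - lam} =
          volume.restrict ({y : ℝ | g y < m - lam} ∩ Ioo 0 1) := by
        rw [μ01, Measure.restrict_restrict hT]
      set S := {y : ℝ | g y < m - lam} ∩ Ioo 0 1 with hSdef
      have hSsub : S ⊆ Ioc 0 (ρ m lam) := by
        intro y hy
        exact ⟨hy.2.1, le_csSup (hρbdd m lam) (Or.inr hy)⟩
      have hIoosub : Ioo 0 (ρ m lam) ⊆ S := by
        intro y hy
        obtain ⟨y', hy', hyy'⟩ := exists_lt_of_lt_csSup (hρne m lam) hy.2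
        rcases hy' with rfl | hy'S
        · exact absurd hy.1 (not_lt.mpr hyy'.le)
        · exact ⟨lt_of_le_of_lt (hgmono hyy'.le) hy'S.1,
            hy.1, hyy'.trans hy'S.2.2⟩
      have hae_set : S =ᵐ[volume] Ioo 0 (ρ m lam) := by
        rw [MeasureTheory.ae_eq_set]
        constructor
        · refine measure_mono_null ?_ (measure_singleton (ρ m lam))
          intro y hy
          rcases hy with ⟨hyS, hyn⟩
          have h1 := hSsub hyS
          by_contra hne
          exact hyn ⟨h1.1, lt_of_le_of_ne h1.2 (fun h => hne (by simp [h]))⟩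
        · rw [Set.diff_eq_empty.mpr hIoosub]; exact measure_empty
      rw [hres, Measure.restrict_congr_set hae_set]
      show ∫ z in Ioo 0 (ρ m lam), wf z ∂volume = ∫ z in (0:ℝ)..(ρ m lam), wf z
      rw [intervalIntegral.integral_of_le (hρ0 m lam), integral_Ioc_eq_integral_Ioo]
    have hJint : Integrable (fun lam => ∫ y, F (y, lam) ∂μ01) μ01 :=
      hFint.swap.integral_prod_left
    have hJnn : 0 ≤ᵐ[μ01] fun lam => ∫ y, F (y, lam) ∂μ01 := by
      filter_upwards [ae_Ioo01] with lam hlam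
      rw [inner_eval lam hlam]
      exact hWnn _ ⟨hρ0 m lam, hρ1 m lam⟩
    have h0 : ∫ lam, (∫ y, F (y, lam) ∂μ01) ∂μ01 = 0 := by
      rw [← step2, ← step1, step0]
    have hae0 := (integral_eq_zero_iff_of_nonneg_ae hJnn hJint).mp h0
    filter_upwards [hae0, ae_Ioo01] with lam h1 h2
    rw [← inner_eval lam h2]
    exact h1
  obtain ⟨hx0, hx1⟩ := hx
  -- contact points
  set Z1 : Set ℝ := Icc 0 x ∩ W ⁻¹' {0} with hZ1def
  have hZ1closed : IsClosed Z1 := isClosed_Icc.inter (isClosed_singleton.preimage hWcont)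
  have ha'mem : sSup Z1 ∈ Z1 :=
    hZ1closed.csSup_mem ⟨0, ⟨le_rfl, hx0⟩, hW0⟩ ⟨x, fun y hy => hy.1.2⟩
  set a' := sSup Z1 with ha'def
  set Z2 : Set ℝ := Icc x 1 ∩ W ⁻¹' {0} with hZ2def
  have hZ2closed : IsClosed Z2 := isClosed_Icc.inter (isClosed_singleton.preimage hWcont)
  have hb'mem : sInf Z2 ∈ Z2 :=
    hZ2closed.csInf_mem ⟨1, ⟨hx1, le_rfl⟩, hW1⟩ ⟨x, fun y hy => hy.1.1⟩
  set b' := sInf Z2 with hb'def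
  have ha'0 : 0 ≤ a' := ha'mem.1.1
  have ha'x : a' ≤ x := ha'mem.1.2
  have hxb' : x ≤ b' := hb'mem.1.1
  have hb'1 : b' ≤ 1 := hb'mem.1.2
  have hab : a' ≤ b' := ha'x.trans hxb'
  have hWpos : ∀ y, y ∈ Ioo a' b' → 0 < W y := by
    intro y hy
    have hy0 : 0 ≤ y := ha'0.trans hy.1.le
    have hy1 : y ≤ 1 := hy.2.le.trans hb'1
    rcases (hWnn y ⟨hy0, hy1⟩).lt_or_eq with h | h
    · exact h
    · exfalso
      rcases le_or_gt y x with hyx | hyx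
      · have : y ≤ a' := le_csSup ⟨x, fun z hz => hz.1.2⟩ ⟨⟨hy0, hyx⟩, h.symm⟩
        exact absurd hy.1 (not_lt.mpr this)
      · have : b' ≤ y := csInf_le ⟨x, fun z hz => hz.1.1⟩ ⟨⟨hyx.le, hy1⟩, h.symm⟩
        exact absurd hy.2 (not_lt.mpr this)
  -- g is constant on (a', b')
  have hgconst : ∀ y ∈ Ioo a' b', ∀ z ∈ Ioo a' b', g y = g z := by
    have main : ∀ α β, α ∈ Ioo a' b' → β ∈ Ioo a' b' → α < β → ¬ g α < g β := by
      intro α β hα hβ hαβ hgab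
      set m := (g α + g β) / 2 with hmdef
      have hgα0 := (hgrange α).1
      have hgα1 := (hgrange α).2
      have hgβ0 := (hgrange β).1
      have hgβ1 := (hgrange β).2
      have hm0 : 0 ≤ m := by rw [hmdef]; linarith
      have hm1 : m ≤ 1 := by rw [hmdef]; linarith
      have hfub := fub m hm0 hm1
      set ε := (g β - g α) / 2 with hεdef
      have hεpos : 0 < ε := by rw [hεdef]; linarith
      have hclaim : ∀ lam ∈ Ioo (0:ℝ) (min ε 1), ¬ W (ρ m lam) = 0 := by
        intro lam hlam
        have hlamε : lam < ε := hlam.2.trans_le (min_le_left _ _)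
        have hα01 : α ∈ Ioo (0:ℝ) 1 :=
          ⟨lt_of_le_of_lt ha'0 hα.1, lt_of_lt_of_le hα.2 hb'1⟩
        have hρge : α ≤ ρ m lam :=
          le_csSup (hρbdd m lam) (Or.inr ⟨by simp only [mem_setOf_eq]; linarith, hα01⟩)
        have hρle : ρ m lam ≤ β := by
          apply csSup_le (hρne m lam)
          rintro y (rfl | hy)
          · linarith [hα.1, hα01.1, hαβ]
          · by_contra hyβ
            push_neg at hyβ
            have h1 := hgmono hyβ.le
            have h2 : g y < m - lam := hy.1
            have h3 : 0 < lam := hlam.1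
            linarith
        have hmem : ρ m lam ∈ Ioo a' b' :=
          ⟨lt_of_lt_of_le hα.1 hρge, lt_of_le_of_lt hρle hβ.2⟩
        exact (hWpos _ hmem).ne'
      rw [ae_iff] at hfub
      have hsub : Ioo (0:ℝ) (min ε 1) ⊆ {lam | ¬ W (ρ m lam) = 0} :=
        fun lam hl => hclaim lam hl
      have hmono' := measure_mono (μ := μ01) hsub
      rw [hfub] at hmono'
      have h0 : μ01 (Ioo 0 (min ε 1)) = 0 := le_antisymm hmono' zero_le
      have hpos : μ01 (Ioo 0 (min ε 1)) ≠ 0 := by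
        rw [μ01, Measure.restrict_apply measurableSet_Ioo,
          inter_eq_self_of_subset_left (Ioo_subset_Ioo le_rfl (min_le_right _ _)),
          Real.volume_Ioo]
        simp only [sub_zero, ne_eq, ENNReal.ofReal_eq_zero, not_le]
        exact lt_min hεpos one_pos
      exact hpos h0
    intro y hy z hz
    rcases lt_trichotomy y z with h | h | h
    · by_contra hne
      exact main y z hy hz h (lt_of_le_of_ne (hgmono h.le) hne)
    · rw [h]
    · by_contra hne
      exact main z y hz hy h (lt_of_le_of_ne (hgmono h.le) (fun hh => hne hh.symm))
  -- the slope θ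
  set θ : ℝ := if a' = b' then 0 else (x - a') / (b' - a') with hθdef
  have hθA : θ * (b' - a') = x - a' := by
    rcases eq_or_lt_of_le hab with h | h
    · have hxa : x = a' := le_antisymm (by rw [h]; exact hxb') ha'x
      rw [hθdef, if_pos h, hxa]; ring
    · rw [hθdef, if_neg h.ne, div_mul_cancel₀ _ (sub_ne_zero.mpr h.ne')]
  have hθ0 : 0 ≤ θ := by
    rcases eq_or_lt_of_le hab with h | h
    · rw [hθdef, if_pos h]
    · rw [hθdef, if_neg h.ne]
      exact div_nonneg (by linarith) (by linarith)
  have hθ1 : θ ≤ 1 := by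
    rcases eq_or_lt_of_le hab with h | h
    · rw [hθdef, if_pos h]; exact zero_le_one
    · rw [hθdef, if_neg h.ne]
      exact (div_le_one (by linarith)).mpr (by linarith)
  -- the test function
  set φf : ℝ → ℝ := fun y => if y ≤ a' then (1:ℝ) else if y < b' then θ else 0 with hφfdef
  have hφanti : Antitone φf := by
    intro y z hyz
    simp only [hφfdef]
    rcases le_or_gt z a' with hz1 | hz1
    · rw [if_pos hz1, if_pos (hyz.trans hz1)]
    rcases lt_or_ge z b' with hz2 | hz2
    · rw [if_neg (not_le.mpr hz1), if_pos hz2]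
      rcases le_or_gt y a' with hy1 | hy1
      · rw [if_pos hy1]; exact hθ1
      · rw [if_neg (not_le.mpr hy1), if_pos (lt_of_le_of_lt hyz hz2)]
    · rw [if_neg (not_le.mpr hz1), if_neg (not_lt.mpr hz2)]
      rcases le_or_gt y a' with hy1 | hy1
      · rw [if_pos hy1]; exact zero_le_one
      rcases lt_or_ge y b' with hy2 | hy2
      · rw [if_neg (not_le.mpr hy1), if_pos hy2]; exact hθ0
      · rw [if_neg (not_le.mpr hy1), if_neg (not_lt.mpr hy2)]
  have hφmeas : Measurable φf :=
    Measurable.ite measurableSet_Iic measurable_const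
      (Measurable.ite measurableSet_Iio measurable_const measurable_const)
  have hφabs : ∀ y, |φf y| ≤ 1 := by
    intro y
    simp only [hφfdef]
    split_ifs
    · norm_num
    · rw [abs_le]; constructor <;> linarith
    · norm_num
  set φ := mkLp φf hφmeas 1 hφabs with hφLpdef
  -- the expansion of integrals against φf
  have expand : ∀ h : ℝ → ℝ, Integrable h μ01 →
      ∫ y in (0:ℝ)..1, h y * φf y =
        (∫ y in (0:ℝ)..a', h y) + θ * ∫ y in a'..b', h y := by
    intro h hint
    have hmul : Integrable (fun y => h y * φf y) μ01 := integrable_bdd_mul hint hφmeas hφabs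
    rw [split_three hmul ha'0 hab hb'1]
    have p1 : ∫ y in (0:ℝ)..a', h y * φf y = ∫ y in (0:ℝ)..a', h y := by
      apply intervalIntegral.integral_congr
      intro z hz
      rw [uIcc_of_le ha'0] at hz
      simp only [hφfdef, if_pos hz.2, mul_one]
    have p2 : ∫ y in a'..b', h y * φf y = θ * ∫ y in a'..b', h y := by
      rw [← intervalIntegral.integral_const_mul]
      apply intervalIntegral.integral_congr_ae
      filter_upwards [ae_ne b'] with z hzb hz
      rw [uIoc_of_le hab] at hz
      simp only [hφfdef, if_neg (not_le.mpr hz.1), if_pos (lt_of_le_of_ne hz.2 hzb)]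
      ring
    have p3 : ∫ y in b'..1, h y * φf y = 0 := by
      have : ∫ y in b'..1, h y * φf y = ∫ y in b'..1, (0:ℝ) := by
        apply intervalIntegral.integral_congr_ae
        apply Filter.Eventually.of_forall
        intro z hz
        rw [uIoc_of_le hb'1] at hz
        simp only [hφfdef, if_neg (not_le.mpr (lt_of_le_of_lt hab hz.1)),
          if_neg (not_lt.mpr hz.1.le), mul_zero]
      rw [this, intervalIntegral.integral_zero]
    rw [p1, p2, p3, add_zero]
  -- nonnegativity against residuals
  have hφcone : ∀ v : Lp ℝ 2 μ01, 0 ≤ ⟪v - proj v, φ⟫ := by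
    intro v
    have hmem : -φ ∈ K01 := by
      apply mem_K01_of_rep _ (fun y => -(φf y)) (fun y z hyz => neg_le_neg (hφanti hyz))
      filter_upwards [Lp.coeFn_neg φ, mkLp_coe φf hφmeas 1 hφabs] with y h1 h2
      rw [h1, Pi.neg_apply, h2]
    have := vi_cone proj hprojmem hprojnear v hmem
    rw [inner_neg_right] at this
    linarith
  have hA : ∫ y in (0:ℝ)..a', wf y = 0 := ha'mem.2
  have hB : ∫ y in (0:ℝ)..b', wf y = 0 := hb'mem.2
  have hAB : ∫ y in a'..b', wf y = 0 := by
    have h := intervalIntegral.integral_add_adjacent_intervals (a := (0:ℝ)) (b := a')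
      (c := b') hwint_vol.intervalIntegrable hwint_vol.intervalIntegrable
    rw [hA, hB] at h
    linarith
  refine ⟨φ, ?_, ?_⟩
  · have hsplit : ⟪u, φ⟫ = ⟪u - p, φ⟫ + ⟪p, φ⟫ := by rw [inner_sub_left]; ring
    have e1 : ⟪u - p, φ⟫ = ∫ y in (0:ℝ)..1, wf y * φf y :=
      inner_eq_integral _ _ hwae (mkLp_coe _ _ _ _)
    have e2 : ⟪p, φ⟫ = ∫ y in (0:ℝ)..1, g y * φf y :=
      inner_eq_integral _ _ hgae (mkLp_coe _ _ _ _)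
    have hgpart : (∫ y in (0:ℝ)..a', g y) + θ * ∫ y in a'..b', g y
        = ∫ y in (0:ℝ)..x, g y := by
      have hadd : (∫ y in (0:ℝ)..a', g y) + ∫ y in a'..x, g y = ∫ y in (0:ℝ)..x, g y :=
        intervalIntegral.integral_add_adjacent_intervals
          (intervalIntegrable01 hgint le_rfl ha'0 (ha'x.trans hx1))
          (intervalIntegrable01 hgint ha'0 ha'x hx1)
      have hcase : θ * ∫ y in a'..b', g y = ∫ y in a'..x, g y := by
        rcases eq_or_lt_of_le hab with heq | hlt
        · have hxa : x = a' := le_antisymm (by rw [heq]; exact hxb') ha'x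
          rw [← heq, hxa, intervalIntegral.integral_same, mul_zero]
        · set c := g ((a' + b') / 2) with hcdef
          have hmid : (a' + b') / 2 ∈ Ioo a' b' := ⟨by linarith, by linarith⟩
          have hconst1 : ∫ y in a'..x, g y = c * (x - a') := by
            have : ∫ y in a'..x, g y = ∫ y in a'..x, c := by
              apply intervalIntegral.integral_congr_ae
              filter_upwards [ae_ne x] with z hzx hz
              rw [uIoc_of_le ha'x] at hz
              exact hgconst z ⟨hz.1, lt_of_lt_of_le (lt_of_le_of_ne hz.2 hzx) hxb'⟩
                _ hmid
            rw [this, intervalIntegral.integral_const, smul_eq_mul, mul_comm]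
          have hconst2 : ∫ y in a'..b', g y = c * (b' - a') := by
            have : ∫ y in a'..b', g y = ∫ y in a'..b', c := by
              apply intervalIntegral.integral_congr_ae
              filter_upwards [ae_ne b'] with z hzb hz
              rw [uIoc_of_le hab] at hz
              exact hgconst z ⟨hz.1, lt_of_le_of_ne hz.2 hzb⟩ _ hmid
            rw [this, intervalIntegral.integral_const, smul_eq_mul, mul_comm]
          rw [hconst1, hconst2]
          linear_combination c * hθA
      linarith
    rw [hsplit, e1, e2, expand wf hwint, expand g hgint, hA, hAB, hgpart]
    ring
  · intro v gv hgvmono hgvrange hgvae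
    have hgvabs : ∀ y, |gv y| ≤ 1 := fun y =>
      abs_le.mpr ⟨by linarith [(hgvrange y).1], (hgvrange y).2⟩
    have hgvint : Integrable gv μ01 := integrable_bdd hgvmono.measurable hgvabs
    have hsplit : ⟪v, φ⟫ = ⟪v - proj v, φ⟫ + ⟪proj v, φ⟫ := by
      rw [inner_sub_left]; ring
    have e2 : ⟪proj v, φ⟫ = ∫ y in (0:ℝ)..1, gv y * φf y :=
      inner_eq_integral _ _ hgvae (mkLp_coe _ _ _ _)
    have hchord : ∫ y in a'..x, gv y ≤ θ * ∫ y in a'..b', gv y := by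
      set c0 := gv x with hc0def
      have h1 : ∫ y in a'..x, gv y ≤ c0 * (x - a') := by
        have := intervalIntegral.integral_mono_on ha'x
          (intervalIntegrable01 hgvint ha'0 ha'x hx1)
          intervalIntegrable_const (fun z hz => hgvmono hz.2)
        rwa [intervalIntegral.integral_const, smul_eq_mul, mul_comm] at this
      have h2 : c0 * (b' - x) ≤ ∫ y in x..b', gv y := by
        have := intervalIntegral.integral_mono_on hxb'
          intervalIntegrable_const
          (intervalIntegrable01 hgvint hx0 hxb' hb'1) (fun z hz => hgvmono hz.1)
        rwa [intervalIntegral.integral_const, smul_eq_mul, mul_comm] at this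
      have hsum : ∫ y in a'..b', gv y = (∫ y in a'..x, gv y) + ∫ y in x..b', gv y :=
        (intervalIntegral.integral_add_adjacent_intervals
          (intervalIntegrable01 hgvint ha'0 ha'x hx1)
          (intervalIntegrable01 hgvint hx0 hxb' hb'1)).symm
      have hc0nn : 0 ≤ c0 := (hgvrange x).1
      have m1 : θ * (c0 * (b' - x)) ≤ θ * ∫ y in x..b', gv y :=
        mul_le_mul_of_nonneg_left h2 hθ0
      have m2 : (1 - θ) * ∫ y in a'..x, gv y ≤ (1 - θ) * (c0 * (x - a')) :=
        mul_le_mul_of_nonneg_left h1 (by linarith)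
      have e0 : θ * (c0 * (b' - x)) = (1 - θ) * (c0 * (x - a')) := by
        linear_combination c0 * hθA
      rw [hsum, mul_add]
      nlinarith [m1, m2, e0]
    have hadd : ∫ y in (0:ℝ)..x, gv y
        = (∫ y in (0:ℝ)..a', gv y) + ∫ y in a'..x, gv y :=
      (intervalIntegral.integral_add_adjacent_intervals
        (intervalIntegrable01 hgvint le_rfl ha'0 (ha'x.trans hx1))
        (intervalIntegrable01 hgvint ha'0 ha'x hx1)).symm
    have hres := hφcone v
    rw [hsplit, e2, expand gv hgvint]
    linarith

end Key

lemma mono_of_concave {f : ℝ → ℝ} (hc : ConcaveOn ℝ (Ici 0) f)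
    (h0 : ∀ t, 0 ≤ t → 0 ≤ f t) : MonotoneOn f (Ici 0) := by
  intro s hs t ht hst
  rcases eq_or_lt_of_le hst with rfl | hst'
  · exact le_rfl
  by_contra hcon
  push_neg at hcon
  have hs' : (0:ℝ) ≤ s := hs
  have hfs := h0 s hs'
  have hft := h0 t (hs'.trans hst)
  set d := f s - f t with hd
  have hdpos : 0 < d := by rw [hd]; linarith
  set r := s + (t - s) * (f s + 1) / d with hr
  have hts : 0 < t - s := by linarith
  have hrt : t < r := by
    rw [hr]
    have h1 : (t - s) < (t - s) * (f s + 1) / d := by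
      rw [lt_div_iff₀ hdpos]
      nlinarith
    linarith
  have hrs : 0 < r - s := by linarith
  set lam := (r - t) / (r - s) with hlam
  have hlam0 : 0 ≤ lam := div_nonneg (by linarith) hrs.le
  have hr0 : (0:ℝ) ≤ r := by linarith
  have hcomb := hc.2 hs (show r ∈ Ici (0:ℝ) from hr0) hlam0
    (show (0:ℝ) ≤ 1 - lam by
      rw [hlam]
      have : (r - t)/(r - s) ≤ 1 := (div_le_one hrs).mpr (by linarith)
      linarith)
    (by ring)
  have hxy : lam • s + (1 - lam) • r = t := by
    simp only [smul_eq_mul, hlam]; field_simp; ring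
  rw [hxy] at hcomb
  have hfr := h0 r hr0
  have hmul : (r - t) * f s + (t - s) * f r ≤ (r - s) * f t := by
    have h2 := mul_le_mul_of_nonneg_left hcomb hrs.le
    have e1 : lam * (r - s) = r - t := by
      rw [hlam]; field_simp
    have e2 : (1 - lam) * (r - s) = t - s := by
      rw [hlam]; field_simp; ring
    calc (r - t) * f s + (t - s) * f r
        = (r - s) * (lam * f s + (1 - lam) * f r) := by
          linear_combination (- f s) * e1 - f r * e2
      _ ≤ (r - s) * f t := h2
  have hkey : (r - s) * d = (t - s) * (f s + 1) := by
    have h3 : r - s = (t - s) * (f s + 1) / d := by rw [hr]; ring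
    rw [h3, div_mul_cancel₀ _ hdpos.ne']
  nlinarith [hmul, hkey, mul_nonneg hts.le hfr]

set_option maxHeartbeats 2000000 in
/-- **Corollary 3.14.** In the confined case, for each `x ∈ [0,1]` the
function `t ↦ P(t,x) = ∫₀ˣ N(t,z) dz` is nondecreasing and concave on `[0,∞)`, and
`P(t,x) → ∫₀ˣ N_∞(z) dz` as `t → ∞`, uniformly in `x ∈ [0,1]`. -/
theorem primitive_monotone_concave_uniform_limit
    (proj : Lp ℝ 2 μ01 → Lp ℝ 2 μ01)
    (hprojmem : ∀ u, proj u ∈ K01)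
    (hprojnear : ∀ u, ∀ k ∈ K01, ‖u - proj u‖ ≤ ‖u - k‖)
    (N0 V0 : Lp ℝ 2 μ01) (hN0K : N0 ∈ K01)
    (hN0range : ∀ᵐ x ∂μ01, (N0 : ℝ → ℝ) x ∈ Set.Icc (0:ℝ) 1)
    (hV0bdd : ∃ C : ℝ, ∀ᵐ x ∂μ01, |(V0 : ℝ → ℝ) x| ≤ C)
    (N : ℝ → Lp ℝ 2 μ01)
    (hN : ∀ t : ℝ, 0 ≤ t → N t = proj (N0 + t • V0))
    (hconf : ∀ t : ℝ, 0 ≤ t → ∀ᵐ x ∂μ01, (N t : ℝ → ℝ) x ∈ Set.Icc (0:ℝ) 1)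
    (Ninf : ℝ → ℝ)
    (hNinf_mono : MonotoneOn Ninf (Set.Ioo 0 1))
    (hNinf_range : ∀ x ∈ Set.Ioo (0:ℝ) 1, Ninf x ∈ Set.Icc (0:ℝ) 1)
    (hNinf : ∀ᵐ x ∂μ01, Filter.Tendsto (fun t : ℝ => (N t : ℝ → ℝ) x)
      Filter.atTop (nhds (Ninf x)))
    (P : ℝ → ℝ → ℝ)
    (hP : ∀ t : ℝ, 0 ≤ t → ∀ x ∈ Set.Icc (0:ℝ) 1,
      P t x = ∫ z in (0:ℝ)..x, (N t : ℝ → ℝ) z) :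
    (∀ x ∈ Set.Icc (0:ℝ) 1,
      MonotoneOn (fun t => P t x) (Set.Ici 0) ∧
        ConcaveOn ℝ (Set.Ici 0) (fun t => P t x)) ∧
      TendstoUniformlyOn P (fun x => ∫ z in (0:ℝ)..x, Ninf z)
        Filter.atTop (Set.Icc 0 1) := by
  have hrep : ∀ t : ℝ, 0 ≤ t →
      ∃ g : ℝ → ℝ, Monotone g ∧ (∀ y, g y ∈ Icc (0:ℝ) 1) ∧
        ((N t : ℝ → ℝ) =ᵐ[μ01] g) := by
    intro t ht
    apply exists_global_rep (N t) ?_ (hconf t ht)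
    rw [hN t ht]
    exact hprojmem _
  choose! G hGmono hGrange hGae using hrep
  have hGabs : ∀ t, 0 ≤ t → ∀ y, |G t y| ≤ 1 := fun t ht y =>
    abs_le.mpr ⟨by linarith [(hGrange t ht y).1], (hGrange t ht y).2⟩
  have hGint : ∀ t, 0 ≤ t → Integrable (G t) μ01 := fun t ht =>
    integrable_bdd (hGmono t ht).measurable (hGabs t ht)
  have hPG : ∀ t, 0 ≤ t → ∀ x ∈ Icc (0:ℝ) 1, P t x = ∫ z in (0:ℝ)..x, G t z := by
    intro t ht x hx
    rw [hP t ht x hx]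
    exact intervalIntegral_congr01 (hGae t ht) le_rfl hx.1 hx.2
  have hPnn : ∀ t, 0 ≤ t → ∀ x ∈ Icc (0:ℝ) 1, 0 ≤ P t x := by
    intro t ht x hx
    rw [hPG t ht x hx]
    exact intervalIntegral.integral_nonneg hx.1 (fun z _ => (hGrange t ht z).1)
  have hconc : ∀ x ∈ Icc (0:ℝ) 1, ConcaveOn ℝ (Ici 0) (fun t => P t x) := by
    intro x hx
    refine ⟨convex_Ici 0, ?_⟩
    intro s hs r hr a b ha hb habsum
    simp only [smul_eq_mul]
    have hs' : (0:ℝ) ≤ s := hs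
    have hr' : (0:ℝ) ≤ r := hr
    have hst : 0 ≤ a * s + b * r := by positivity
    have hprojae : ((proj (N0 + (a * s + b * r) • V0) : Lp ℝ 2 μ01) : ℝ → ℝ)
        =ᵐ[μ01] G (a * s + b * r) := by
      rw [← hN _ hst]; exact hGae _ hst
    obtain ⟨φ, hφ1, hφ2⟩ := key_exists proj hprojmem hprojnear
      (N0 + (a * s + b * r) • V0) (hGmono _ hst) (hGrange _ hst) hprojae hx
    have key2 : P s x ≤ ⟪N0 + s • V0, φ⟫ := by
      rw [hPG s hs' x hx]
      exact hφ2 (N0 + s • V0) (G s) (hGmono s hs') (hGrange s hs')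
        (by rw [← hN s hs']; exact hGae s hs')
    have key3 : P r x ≤ ⟪N0 + r • V0, φ⟫ := by
      rw [hPG r hr' x hx]
      exact hφ2 (N0 + r • V0) (G r) (hGmono r hr') (hGrange r hr')
        (by rw [← hN r hr']; exact hGae r hr')
    have key1 : ⟪N0 + (a * s + b * r) • V0, φ⟫ = P (a * s + b * r) x := by
      rw [hPG _ hst x hx]; exact hφ1
    have hut : N0 + (a * s + b * r) • V0 = a • (N0 + s • V0) + b • (N0 + r • V0) := by
      rw [smul_add, smul_add, smul_smul, smul_smul]
      rw [show a • N0 + (a * s) • V0 + (b • N0 + (b * r) • V0)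
          = (a • N0 + b • N0) + ((a * s) • V0 + (b * r) • V0) from by abel]
      rw [← add_smul, habsum, one_smul, ← add_smul]
    have hlin : ⟪N0 + (a * s + b * r) • V0, φ⟫
        = a * ⟪N0 + s • V0, φ⟫ + b * ⟪N0 + r • V0, φ⟫ := by
      rw [hut, inner_add_left, real_inner_smul_left, real_inner_smul_left]
    calc a * P s x + b * P r x
        ≤ a * ⟪N0 + s • V0, φ⟫ + b * ⟪N0 + r • V0, φ⟫ :=
          add_le_add (mul_le_mul_of_nonneg_left key2 ha)
            (mul_le_mul_of_nonneg_left key3 hb)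
      _ = P (a * s + b * r) x := by rw [← hlin, key1]
  have hmono : ∀ x ∈ Icc (0:ℝ) 1, MonotoneOn (fun t => P t x) (Ici 0) :=
    fun x hx => mono_of_concave (hconc x hx) (fun t ht => hPnn t ht x hx)
  -- measurability and integrability of the limit
  have hNinfmeas : AEMeasurable Ninf μ01 := by
    have hseq : ∀ᵐ y ∂μ01, Filter.Tendsto (fun n : ℕ => (N (n : ℝ) : ℝ → ℝ) y)
        Filter.atTop (nhds (Ninf y)) := by
      filter_upwards [hNinf] with y hy
      exact hy.comp tendsto_natCast_atTop_atTop
    exact aemeasurable_of_tendsto_metrizable_ae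
      (f := fun (n : ℕ) => ((N (n:ℝ)) : ℝ → ℝ)) Filter.atTop
      (fun n => (Lp.aestronglyMeasurable (N (n : ℝ))).aemeasurable) hseq
  have hNinfint : Integrable Ninf μ01 := by
    have hb : ∀ᵐ y ∂μ01, ‖Ninf y‖ ≤ 1 := by
      filter_upwards [ae_Ioo01] with y hy
      rw [Real.norm_eq_abs, abs_le]
      exact ⟨by linarith [(hNinf_range y hy).1], (hNinf_range y hy).2⟩
    exact (MemLp.of_bound (p := 1) hNinfmeas.aestronglyMeasurable 1 hb).integrable le_rfl
  -- pointwise convergence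
  have hptwise : ∀ x ∈ Icc (0:ℝ) 1, Filter.Tendsto (fun t => P t x) Filter.atTop
      (nhds (∫ z in (0:ℝ)..x, Ninf z)) := by
    intro x hx
    have hsub : Ioo (0:ℝ) x ⊆ Ioo 0 1 := Ioo_subset_Ioo le_rfl hx.2
    have hres : μ01.restrict (Ioo 0 x) = volume.restrict (Ioo 0 x) :=
      restrict01 measurableSet_Ioo hsub
    have hLx : ∫ z in (0:ℝ)..x, Ninf z = ∫ z in Ioo 0 x, Ninf z ∂volume := by
      rw [intervalIntegral.integral_of_le hx.1, integral_Ioc_eq_integral_Ioo]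
    have hmain : Filter.Tendsto (fun t => ∫ z in Ioo 0 x, (N t : ℝ → ℝ) z ∂volume)
        Filter.atTop (nhds (∫ z in Ioo 0 x, Ninf z ∂volume)) := by
      apply tendsto_integral_filter_of_dominated_convergence (fun _ => (1:ℝ))
      · filter_upwards [Filter.eventually_ge_atTop (0:ℝ)] with t _
        have := (Lp.aestronglyMeasurable (N t)).restrict (s := Ioo 0 x)
        rwa [hres] at this
      · filter_upwards [Filter.eventually_ge_atTop (0:ℝ)] with t ht
        have hconf' : ∀ᵐ z ∂volume.restrict (Ioo (0:ℝ) 1),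
            (N t : ℝ → ℝ) z ∈ Icc (0:ℝ) 1 := hconf t ht
        have h1 : ∀ᵐ z ∂volume.restrict (Ioo 0 x),
            (N t : ℝ → ℝ) z ∈ Icc (0:ℝ) 1 :=
          ae_restrict_of_ae_restrict_of_subset hsub hconf'
        filter_upwards [h1] with z hz
        rw [Real.norm_eq_abs, abs_le]
        exact ⟨by linarith [hz.1], hz.2⟩
      · exact integrable_const 1
      · have hNinf' : ∀ᵐ z ∂volume.restrict (Ioo (0:ℝ) 1),
            Filter.Tendsto (fun t : ℝ => (N t : ℝ → ℝ) z) Filter.atTop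
              (nhds (Ninf z)) := hNinf
        exact ae_restrict_of_ae_restrict_of_subset hsub hNinf'
    rw [hLx]
    apply Filter.Tendsto.congr' ?_ hmain
    filter_upwards [Filter.eventually_ge_atTop (0:ℝ)] with t ht
    rw [hP t ht x hx, intervalIntegral.integral_of_le hx.1, integral_Ioc_eq_integral_Ioo]
  -- Lipschitz estimates
  have hGlip : ∀ t, 0 ≤ t → ∀ x ∈ Icc (0:ℝ) 1, ∀ y ∈ Icc (0:ℝ) 1,
      |P t x - P t y| ≤ |x - y| := by
    intro t ht x hx y hy
    rw [hPG t ht x hx, hPG t ht y hy,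
      intervalIntegral.integral_interval_sub_left
        (intervalIntegrable01 (hGint t ht) le_rfl hx.1 hx.2)
        (intervalIntegrable01 (hGint t ht) le_rfl hy.1 hy.2)]
    have h := intervalIntegral.norm_integral_le_of_norm_le_const (C := 1)
      (f := G t) (a := y) (b := x)
      (fun z _ => by rw [Real.norm_eq_abs]; exact hGabs t ht z)
    rw [Real.norm_eq_abs, one_mul] at h
    exact h
  set L : ℝ → ℝ := fun x => ∫ z in (0:ℝ)..x, Ninf z with hLdef
  set Ninf' : ℝ → ℝ := (Ioo (0:ℝ) 1).indicator Ninf with hN'def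
  have hN'abs : ∀ y, |Ninf' y| ≤ 1 := by
    intro y
    rw [hN'def]
    by_cases hy : y ∈ Ioo (0:ℝ) 1
    · rw [indicator_of_mem hy, abs_le]
      exact ⟨by linarith [(hNinf_range y hy).1], (hNinf_range y hy).2⟩
    · rw [indicator_of_notMem hy]; norm_num
  have hN'int : Integrable Ninf' volume := by
    rw [hN'def, integrable_indicator_iff measurableSet_Ioo]
    exact hNinfint
  have hLN' : ∀ x ∈ Icc (0:ℝ) 1, L x = ∫ z in (0:ℝ)..x, Ninf' z := by
    intro x hx
    apply intervalIntegral.integral_congr_ae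
    filter_upwards [ae_ne 1] with z hz1 hz
    rw [uIoc_of_le hx.1] at hz
    have hz' : z ∈ Ioo (0:ℝ) 1 := ⟨hz.1, lt_of_le_of_ne (hz.2.trans hx.2) hz1⟩
    rw [hN'def, indicator_of_mem hz']
  have hLlip : ∀ x ∈ Icc (0:ℝ) 1, ∀ y ∈ Icc (0:ℝ) 1, |L x - L y| ≤ |x - y| := by
    intro x hx y hy
    rw [hLN' x hx, hLN' y hy,
      intervalIntegral.integral_interval_sub_left
        hN'int.intervalIntegrable hN'int.intervalIntegrable]
    have h := intervalIntegral.norm_integral_le_of_norm_le_const (C := 1)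
      (f := Ninf') (a := y) (b := x)
      (fun z _ => by rw [Real.norm_eq_abs]; exact hN'abs z)
    rw [Real.norm_eq_abs, one_mul] at h
    exact h
  refine ⟨fun x hx => ⟨hmono x hx, hconc x hx⟩, ?_⟩
  rw [Metric.tendstoUniformlyOn_iff]
  intro ε hε
  obtain ⟨n, hn⟩ := exists_nat_one_div_lt (show (0:ℝ) < ε/3 by linarith)
  have hnp : (0:ℝ) < (n:ℝ) + 1 := by positivity
  have hximem : ∀ i ∈ Finset.range (n + 2), (i:ℝ)/((n:ℝ)+1) ∈ Icc (0:ℝ) 1 := by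
    intro i hi
    have hiℕ : i ≤ n + 1 := by
      have := Finset.mem_range.mp hi
      omega
    constructor
    · positivity
    · rw [div_le_one hnp]
      exact_mod_cast hiℕ
  have hev : ∀ᶠ t in Filter.atTop, ∀ i ∈ Finset.range (n + 2),
      |P t ((i:ℝ)/((n:ℝ)+1)) - L ((i:ℝ)/((n:ℝ)+1))| < ε/3 := by
    rw [Filter.eventually_all_finset]
    intro i hi
    have htends := hptwise _ (hximem i hi)
    filter_upwards [Metric.tendsto_nhds.mp htends (ε/3) (by linarith)] with t htd
    rwa [Real.dist_eq] at htd
  filter_upwards [hev, Filter.eventually_ge_atTop (0:ℝ)] with t hti ht0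
  intro x hx
  set i : ℕ := ⌊x * ((n:ℝ) + 1)⌋₊ with hidef
  set xi : ℝ := (i:ℝ)/((n:ℝ)+1) with hxidef
  have hile : (i:ℝ) ≤ x * ((n:ℝ)+1) := Nat.floor_le (mul_nonneg hx.1 hnp.le)
  have hlt : x * ((n:ℝ)+1) < (i:ℝ) + 1 := Nat.lt_floor_add_one _
  have himem : i ∈ Finset.range (n + 2) := by
    rw [Finset.mem_range]
    have h1 : (i:ℝ) ≤ (n:ℝ) + 1 := by nlinarith [hx.2]
    have h2 : i ≤ n + 1 := by exact_mod_cast h1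
    omega
  have hxilo : xi ≤ x := by
    rw [hxidef, div_le_iff₀ hnp]
    linarith
  have hxihi : x - xi ≤ 1/((n:ℝ)+1) := by
    have hx' : x ≤ ((i:ℝ) + 1)/((n:ℝ)+1) := by
      rw [le_div_iff₀ hnp]; linarith
    have hsplit : ((i:ℝ) + 1)/((n:ℝ)+1) = xi + 1/((n:ℝ)+1) := by
      rw [hxidef]; ring
    linarith
  have hxd : |x - xi| ≤ 1/((n:ℝ)+1) := by
    rw [abs_le]
    constructor
    · have : (0:ℝ) ≤ 1/((n:ℝ)+1) := by positivity
      linarith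
    · exact hxihi
  have h1 := hti i himem
  rw [← hxidef] at h1
  have h2 := hLlip x hx xi (hximem i himem)
  have h3 := hGlip t ht0 xi (hximem i himem) x hx
  rw [Real.dist_eq]
  have t1 : |L x - P t x| ≤ |L x - L xi| + |L xi - P t xi| + |P t xi - P t x| := by
    have u1 := abs_sub_le (L x) (L xi) (P t x)
    have u2 := abs_sub_le (L xi) (P t xi) (P t x)
    linarith
  have hmid : |L xi - P t xi| < ε/3 := by rw [abs_sub_comm]; exact h1
  have hLL : |L x - L xi| < ε/3 := lt_of_le_of_lt (h2.trans hxd) hn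
  have hPP : |P t xi - P t x| < ε/3 := by
    have : |P t xi - P t x| ≤ |xi - x| := h3
    rw [abs_sub_comm xi x] at this
    exact lt_of_le_of_lt (this.trans hxd) hn
  linarith
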